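/- arXiv:1710.05830 — 4 statements merged into one kernel-verified Lean document; each statement's English description precedes it below -/
import Mathlib

section
/- Let X be a geodesic metric space, E a closed subset of X, and φ(x) = d(x,E) the distance function to E. Define ψ = φ²/2 and the cost c(x,y) = d(x,y)²/2. Then ψ is c-concave, i.e. ψ^{cc} = ψ, where ψ^c(y) = inf_{x∈X}[d(x,y)²/2 − ψ(x)]. -/
/-!
Every function satisfies `f ≤ f^{cc}`. Conversely, for `p ∈ E` we have `ψ ≤ c(·, p)`, so
`ψ^c(p) ≥ 0` and hence `ψ^{cc}(x) ≤ c(p, x)`; the infimum of `c(p, x)` over `p ∈ E` is `ψ(x)`.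
-/

open Metric

/-- The `c`-transform of an extended-real-valued function, for the cost
`c(x,y) = d(x,y)²/2`. -/
noncomputable def cTransform {X : Type*} [MetricSpace X] (f : X → EReal) : X → EReal :=
  fun y => ⨅ x, (((dist x y) ^ 2 / 2 : ℝ) : EReal) - f x

section CTransform

variable {X : Type*} [MetricSpace X]

theorem cTransform_le (f : X → EReal) (x y : X) :
    cTransform f y ≤ ((dist x y ^ 2 / 2 : ℝ) : EReal) - f x :=
  iInf_le _ x

theorem le_cTransform_cTransform (f : X → EReal) : f ≤ cTransform (cTransform f) := by
  intro x
  refine le_iInf fun y => ?_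
  have h := cTransform_le f x y
  rw [EReal.le_sub_iff_add_le (.inr (EReal.coe_ne_bot _)) (.inr (EReal.coe_ne_top _))] at h ⊢
  rwa [dist_comm, add_comm]

theorem cTransform_nonneg {f : X → EReal} {y : X}
    (h : ∀ x, f x ≤ ((dist x y ^ 2 / 2 : ℝ) : EReal)) : 0 ≤ cTransform f y :=
  le_iInf fun x =>
    (EReal.sub_nonneg (.inl (EReal.coe_ne_top _)) (.inl (EReal.coe_ne_bot _))).2 (h x)

theorem cTransform_le_of_nonneg {g : X → EReal} {p : X} (hp : 0 ≤ g p) (x : X) :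
    cTransform g x ≤ ((dist p x ^ 2 / 2 : ℝ) : EReal) :=
  (cTransform_le g p x).trans (by simpa using EReal.sub_le_sub le_rfl hp)

end CTransform

section InfDist

variable {X : Type*} [PseudoMetricSpace X] {E : Set X}

theorem infDist_sq_half_le_of_mem {p : X} (hp : p ∈ E) (x : X) :
    infDist x E ^ 2 / 2 ≤ dist x p ^ 2 / 2 := by
  gcongr
  exacts [infDist_nonneg, infDist_le_dist_of_mem hp]

theorem exists_mem_dist_sq_half_lt (hE : E.Nonempty) {x : X} {r : ℝ}
    (hr : infDist x E ^ 2 / 2 < r) : ∃ p ∈ E, dist p x ^ 2 / 2 < r := by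
  have hlt : infDist x E < √(2 * r) := Real.lt_sqrt_of_sq_lt (by linarith)
  obtain ⟨p, hpE, hp⟩ := (infDist_lt_iff hE).1 hlt
  refine ⟨p, hpE, ?_⟩
  have := (Real.lt_sqrt dist_nonneg).1 hp
  rw [dist_comm]
  linarith

end InfDist

theorem distSq_half_cConcave_general {X : Type*} [MetricSpace X]
    (E : Set X) (hEne : E.Nonempty) :
    cTransform (cTransform (fun x => ((infDist x E ^ 2 / 2 : ℝ) : EReal)))
      = fun x => ((infDist x E ^ 2 / 2 : ℝ) : EReal) := by
  set ψ : X → EReal := fun x => ((infDist x E ^ 2 / 2 : ℝ) : EReal)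
  have hψE : ∀ p ∈ E, 0 ≤ cTransform ψ p := fun p hp =>
    cTransform_nonneg fun x => EReal.coe_le_coe_iff.2 (infDist_sq_half_le_of_mem hp x)
  funext x
  refine le_antisymm ?_ (le_cTransform_cTransform ψ x)
  refine EReal.le_of_forall_lt_iff_le.1 fun r hr => ?_
  obtain ⟨p, hpE, hp⟩ := exists_mem_dist_sq_half_lt hEne (EReal.coe_lt_coe_iff.1 hr)
  exact (cTransform_le_of_nonneg (hψE p hpE) x).trans (EReal.coe_le_coe_iff.2 hp.le)

/-- For a closed nonempty subset `E` of a complete separable geodesic space `X`, the function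
`ψ = d(·,E)²/2` is `c`-concave: `ψ^{cc} = ψ`. -/
theorem distSq_half_cConcave {X : Type*} [MetricSpace X] [CompleteSpace X]
    [TopologicalSpace.SeparableSpace X]
    (hgeo : ∀ x y : X, ∃ γ : ℝ → X, γ 0 = x ∧ γ 1 = y ∧
      ∀ s ∈ Set.Icc (0:ℝ) 1, ∀ t ∈ Set.Icc (0:ℝ) 1,
        dist (γ s) (γ t) = |s - t| * dist x y)
    (E : Set X) (hE : IsClosed E) (hEne : E.Nonempty) :
    cTransform (cTransform (fun x => ((infDist x E ^ 2 / 2 : ℝ) : EReal)))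
      = fun x => ((infDist x E ^ 2 / 2 : ℝ) : EReal) :=
  distSq_half_cConcave_general E hEne
end

section
/- Let X be a geodesic space, E closed, φ(x)=d(x,E), and a + α' < φ(x) < b − α' with r₀ as above. Then for x₁, x₂ ∈ B(x, r₀), the arc-length distance d^{α'}(x₁,x₂) — the infimum of lengths of curves connecting x₁ to x₂ within φ⁻¹((a+α', b−α')) — equals d(x₁, x₂). -/
/-!
A constant-speed geodesic from `x₁` to `x₂` has length `d(x₁, x₂)`, and no curve from `x₁` to
`x₂` is shorter. Since `φ = d(·, E)` is 1-Lipschitz and the geodesic between two points of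
`B(x, r₀)` stays in `B(x, 2r₀)`, where `φ` deviates from `φ(x)` by less than `2r₀`, the choice of
`r₀` keeps that geodesic inside `φ⁻¹((a + α', b - α'))`, so it is admissible and realises the
infimum.
-/

open Metric Set

section PseudoMetricSpace

variable {X : Type*} [PseudoMetricSpace X]

def IsGeodesicSegment (γ : ℝ → X) (x y : X) : Prop :=
  γ 0 = x ∧ γ 1 = y ∧
    ∀ s ∈ Icc (0 : ℝ) 1, ∀ t ∈ Icc (0 : ℝ) 1, dist (γ s) (γ t) = |s - t| * dist x y

theorem LipschitzOnWith.eVariationOn_Icc_le {γ : ℝ → X} {C : NNReal} {a b : ℝ}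
    (h : LipschitzOnWith C γ (Icc a b)) :
    eVariationOn γ (Icc a b) ≤ C * ENNReal.ofReal (b - a) := by
  simpa using h.comp_eVariationOn_le (g := id) (mapsTo_id _)

namespace IsGeodesicSegment

variable {γ : ℝ → X} {x y : X}

theorem lipschitzOnWith (hγ : IsGeodesicSegment γ x y) :
    LipschitzOnWith (Real.toNNReal (dist x y)) γ (Icc 0 1) := by
  refine LipschitzOnWith.of_dist_le' fun s hs t ht => ?_
  rw [hγ.2.2 s hs t ht, Real.dist_eq, mul_comm]

theorem eVariationOn_le (hγ : IsGeodesicSegment γ x y) :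
    eVariationOn γ (Icc 0 1) ≤ ENNReal.ofReal (dist x y) := by
  simpa [ENNReal.ofReal] using hγ.lipschitzOnWith.eVariationOn_Icc_le

theorem dist_apply_le (hγ : IsGeodesicSegment γ x y) {t : ℝ} (ht : t ∈ Icc (0 : ℝ) 1) (z : X) :
    dist (γ t) z ≤ (1 - t) * dist x z + t * dist y z + 2 * t * (1 - t) * dist x y := by
  obtain ⟨hγ0, hγ1, hγd⟩ := hγ
  have h0 : dist (γ t) x = t * dist x y := by
    have := hγd t ht 0 (by simp)
    rwa [hγ0, sub_zero, abs_of_nonneg ht.1] at this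
  have h1 : dist (γ t) y = (1 - t) * dist x y := by
    have := hγd t ht 1 (by simp)
    rwa [hγ1, abs_of_nonpos (by linarith [ht.2]), neg_sub] at this
  -- average the triangle inequalities through `x` and through `y` with weights `1 - t` and `t`
  have hx := dist_triangle (γ t) x z
  have hy := dist_triangle (γ t) y z
  have ht₀ : 0 ≤ t := ht.1
  have ht₁ : 0 ≤ 1 - t := by linarith [ht.2]
  nlinarith [mul_le_mul_of_nonneg_left hx ht₁, mul_le_mul_of_nonneg_left hy ht₀]

theorem dist_lt_two_mul (hγ : IsGeodesicSegment γ x y) {z : X} {r : ℝ}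
    (hx : x ∈ ball z r) (hy : y ∈ ball z r) {t : ℝ} (ht : t ∈ Icc (0 : ℝ) 1) :
    dist (γ t) z < 2 * r := by
  rw [mem_ball] at hx hy
  have hxy : dist x y < 2 * r := by linarith [dist_triangle_right x y z]
  have ht₁ : 0 ≤ 1 - t := by linarith [ht.2]
  have : 2 * t * (1 - t) ≤ 1 / 2 := by nlinarith [sq_nonneg (2 * t - 1)]
  nlinarith [hγ.dist_apply_le ht z, ht.1, dist_nonneg (x := x) (y := y)]

end IsGeodesicSegment

theorem iInf_eVariationOn_eq_dist {S : Set (ℝ → X)} {x y : X}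
    (hS : ∀ γ ∈ S, γ 0 = x ∧ γ 1 = y) {γ : ℝ → X} (hγS : γ ∈ S)
    (hγ : IsGeodesicSegment γ x y) :
    ⨅ γ ∈ S, eVariationOn γ (Icc 0 1) = ENNReal.ofReal (dist x y) := by
  refine le_antisymm ((iInf₂_le γ hγS).trans hγ.eVariationOn_le) (le_iInf₂ fun γ' hγ' => ?_)
  obtain ⟨h0, h1⟩ := hS γ' hγ'
  simpa [h0, h1, edist_dist] using
    eVariationOn.edist_le γ' (s := Icc (0 : ℝ) 1) (x := 0) (y := 1) (by simp) (by simp)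

theorem infDist_mem_Ioo_of_dist_lt {E : Set X} {x y : X} {δ : ℝ} (h : dist y x < δ) :
    infDist y E ∈ Ioo (infDist x E - δ) (infDist x E + δ) := by
  have := abs_sub_le_iff.mp ((lipschitz_infDist_pt E).dist_le_mul y x)
  simp only [NNReal.coe_one, one_mul] at this
  constructor <;> linarith [this.1, this.2]

end PseudoMetricSpace

theorem arcLength_dist_eq_dist_general {X : Type*} [MetricSpace X]
    (hgeo : ∀ x y : X, ∃ γ : ℝ → X, γ 0 = x ∧ γ 1 = y ∧
      ∀ s ∈ Set.Icc (0:ℝ) 1, ∀ t ∈ Set.Icc (0:ℝ) 1,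
        dist (γ s) (γ t) = |s - t| * dist x y)
    (E : Set X)
    (a b α' : ℝ)
    (x : X)
    (r₀ : ℝ)
    (hr₀' : r₀ < (1/2) * min (infDist x E - a - α') (b - α' - infDist x E))
    (x₁ x₂ : X) (hx₁ : x₁ ∈ ball x r₀) (hx₂ : x₂ ∈ ball x r₀) :
    (⨅ γ ∈ {γ : ℝ → X | ContinuousOn γ (Set.Icc 0 1) ∧ γ 0 = x₁ ∧ γ 1 = x₂ ∧
        ∀ t ∈ Set.Icc (0:ℝ) 1, infDist (γ t) E ∈ Set.Ioo (a + α') (b - α')},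
      eVariationOn γ (Set.Icc 0 1)) = ENNReal.ofReal (dist x₁ x₂) := by
  obtain ⟨γ, hγ⟩ := hgeo x₁ x₂
  have hγ : IsGeodesicSegment γ x₁ x₂ := hγ
  refine iInf_eVariationOn_eq_dist (fun γ' hγ' => ⟨hγ'.2.1, hγ'.2.2.1⟩) ?_ hγ
  refine ⟨hγ.lipschitzOnWith.continuousOn, hγ.1, hγ.2.1, fun t ht => ?_⟩
  have hφ := infDist_mem_Ioo_of_dist_lt (E := E) (hγ.dist_lt_two_mul hx₁ hx₂ ht)
  have hmin₁ := min_le_left (infDist x E - a - α') (b - α' - infDist x E)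
  have hmin₂ := min_le_right (infDist x E - a - α') (b - α' - infDist x E)
  constructor <;> linarith [hφ.1, hφ.2]

/-- Lemma 3.18 of the paper (arc-length distance part): under the same assumptions,
the arc-length distance inside `φ⁻¹((a + α', b - α'))` between two points of `B(x, r₀)`
equals the ambient distance, where `φ = d(·, E)`. -/
theorem arcLength_dist_eq_dist {X : Type*} [MetricSpace X]
    (hgeo : ∀ x y : X, ∃ γ : ℝ → X, γ 0 = x ∧ γ 1 = y ∧
      ∀ s ∈ Set.Icc (0:ℝ) 1, ∀ t ∈ Set.Icc (0:ℝ) 1,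
        dist (γ s) (γ t) = |s - t| * dist x y)
    (E : Set X) (hE : IsClosed E) (hEne : E.Nonempty)
    (a b α' : ℝ) (ha : 0 < a) (hab : a < b) (hα'0 : 0 ≤ α') (hα' : α' < (b - a) / 2)
    (x : X) (hx1 : a + α' < infDist x E) (hx2 : infDist x E < b - α')
    (r₀ : ℝ) (hr₀ : 0 < r₀)
    (hr₀' : r₀ < (1/2) * min (infDist x E - a - α') (b - α' - infDist x E))
    (x₁ x₂ : X) (hx₁ : x₁ ∈ ball x r₀) (hx₂ : x₂ ∈ ball x r₀) :
    (⨅ γ ∈ {γ : ℝ → X | ContinuousOn γ (Set.Icc 0 1) ∧ γ 0 = x₁ ∧ γ 1 = x₂ ∧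
        ∀ t ∈ Set.Icc (0:ℝ) 1, infDist (γ t) E ∈ Set.Ioo (a + α') (b - α')},
      eVariationOn γ (Set.Icc 0 1)) = ENNReal.ofReal (dist x₁ x₂) :=
  arcLength_dist_eq_dist_general hgeo E a b α' x r₀ hr₀' x₁ x₂ hx₁ hx₂
end

section
/- Let f: (0,∞) → [0,∞) be a nonnegative nondecreasing function that does not vanish identically, and suppose there are d, K > 0 with f(r) ≤ K(r^d + 1) for all r > 0. Then for every Ω > 1 and every C > Ω^d, there exist infinitely many positive integers m such that f(Ω^{m+1}) ≤ C·f(Ω^m). -/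
/-!
If `f(Ω^{m+1}) > C f(Ω^m)` for all large `m`, then `f(Ω^m)` grows at least like `C^m`, while the
growth bound gives `f(Ω^m) = O((Ω^d)^m)`; since `Ω^d < C` this forces `f(Ω^m) = 0` for large `m`,
contradicting that `f` is monotone and not identically zero.
-/

open Filter

theorem frequently_le_mul_of_le_geometric {u : ℕ → ℝ} {A B C : ℝ} (hB : 0 ≤ B) (hBC : B < C)
    (hpos : ∀ᶠ m in atTop, 0 < u m) (hbound : ∀ m, u m ≤ A * B ^ m) :
    ∃ᶠ m in atTop, u (m + 1) ≤ C * u m := by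
  by_contra h
  simp only [not_frequently, not_le] at h
  obtain ⟨N, hN⟩ := eventually_atTop.1 (hpos.and h)
  have hC : 0 < C := hB.trans_lt hBC
  have hlower (k : ℕ) : C ^ k * u N ≤ u (N + k) :=
    geom_le (u := fun k => u (N + k)) hC.le k fun j _ => (hN (N + j) (by omega)).2.le
  have hupper (k : ℕ) : u N ≤ A * B ^ N * (B / C) ^ k := by
    rw [div_pow, mul_div_assoc', le_div_iff₀ (pow_pos hC k), mul_assoc, ← pow_add, mul_comm]
    exact (hlower k).trans (hbound (N + k))
  have hlim : Tendsto (fun k : ℕ => A * B ^ N * (B / C) ^ k) atTop (nhds 0) := by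
    simpa using (tendsto_pow_atTop_nhds_zero_of_lt_one (div_nonneg hB hC.le)
      ((div_lt_one hC).2 hBC)).const_mul (A * B ^ N)
  exact (hN N le_rfl).1.not_ge (ge_of_tendsto' hlim hupper)

theorem eventually_pos_of_monotoneOn_Ioi {f : ℝ → ℝ} (hnonneg : ∀ r, 0 < r → 0 ≤ f r)
    (hmono : MonotoneOn f (Set.Ioi 0)) (hnz : ∃ r, 0 < r ∧ f r ≠ 0) :
    ∀ᶠ r in atTop, 0 < f r := by
  obtain ⟨r₀, hr₀, hfr₀⟩ := hnz
  filter_upwards [eventually_ge_atTop r₀] with r hr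
  exact ((hnonneg r₀ hr₀).lt_of_ne' hfr₀).trans_le (hmono hr₀ (hr₀.trans_le hr) hr)

theorem rpow_add_one_le_two_mul_pow {Ω d : ℝ} (hΩ : 1 ≤ Ω) (hd : 0 ≤ d) (m : ℕ) :
    (Ω ^ m) ^ d + 1 ≤ 2 * (Ω ^ d) ^ m := by
  have h : 1 ≤ (Ω ^ d) ^ m := one_le_pow₀ (Real.one_le_rpow hΩ hd)
  rw [← Real.rpow_pow_comm (zero_le_one.trans hΩ)]
  linarith

/-- Lemma 3.1 of Colding–Minicozzi (special case): a nonnegative nondecreasing function on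
`(0,∞)` of polynomial growth `f(r) ≤ K(r^d + 1)` which is not identically zero satisfies
`f(Ω^{m+1}) ≤ C f(Ω^m)` for infinitely many integers `m`, for any `Ω > 1` and `C > Ω^d`. -/
theorem poly_growth_doubling_infinitely_often (f : ℝ → ℝ) (d K : ℝ)
    (hd : 0 < d) (hK : 0 < K)
    (hnonneg : ∀ r : ℝ, 0 < r → 0 ≤ f r)
    (hmono : MonotoneOn f (Set.Ioi (0:ℝ)))
    (hnz : ∃ r : ℝ, 0 < r ∧ f r ≠ 0)
    (hgrowth : ∀ r : ℝ, 0 < r → f r ≤ K * (r ^ d + 1)) :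
    ∀ Ω : ℝ, 1 < Ω → ∀ C : ℝ, Ω ^ d < C →
      {m : ℕ | f (Ω ^ (m + 1)) ≤ C * f (Ω ^ m)}.Infinite := by
  intro Ω hΩ C hC
  have hpos : ∀ᶠ m : ℕ in atTop, 0 < f (Ω ^ m) :=
    (tendsto_pow_atTop_atTop_of_one_lt hΩ).eventually
      (eventually_pos_of_monotoneOn_Ioi hnonneg hmono hnz)
  have hbound (m : ℕ) : f (Ω ^ m) ≤ 2 * K * (Ω ^ d) ^ m := by
    calc f (Ω ^ m) ≤ K * ((Ω ^ m) ^ d + 1) := hgrowth _ (pow_pos (zero_lt_one.trans hΩ) m)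
      _ ≤ K * (2 * (Ω ^ d) ^ m) := by gcongr; exact rpow_add_one_le_two_mul_pow hΩ.le hd.le m
      _ = 2 * K * (Ω ^ d) ^ m := by ring
  exact Nat.frequently_atTop_iff_infinite.1 <| frequently_le_mul_of_le_geometric
    (u := fun m => f (Ω ^ m)) (Real.rpow_nonneg (zero_le_one.trans hΩ.le) d) hC hpos hbound
end

section
/- Let h: (a,b) → (0,∞) and N > 1. Suppose for all σ₋ < s ≤ t < σ₊ with (σ₋, σ₊) ⊆ (a,b) one has ((σ₊−t)/(σ₊−s))^{N−1} ≤ h(t)/h(s) ≤ ((t−σ₋)/(s−σ₋))^{N−1}. Then h is locally Lipschitz on (a,b). -/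
/-!
With `σ₋ = a` and `σ₊ = b` the two ratio bounds say exactly that `h / (· - a) ^ (N - 1)` is
antitone and `h / (b - ·) ^ (N - 1)` is monotone on `(a, b)`. Writing `h = φ u = ψ v` with
`u` antitone, `v` monotone and `φ, ψ` smooth and positive, for `s ≤ t` one gets
`h t - h s ≤ u s (φ t - φ s)` and `h s - h t ≤ v t (ψ s - ψ t)`; near a point `u` and `v` are
bounded by their values at the ends of a small ball and `φ, ψ` are Lipschitz there.
-/

open Set Metric NNReal

theorem antitoneOn_div_of_div_le_div {α : Type*} [Preorder α] {s : Set α} {f g : α → ℝ}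
    (hf : ∀ x ∈ s, 0 < f x) (hg : ∀ x ∈ s, 0 < g x)
    (h : ∀ x ∈ s, ∀ y ∈ s, x ≤ y → f y / f x ≤ g y / g x) : AntitoneOn (f / g) s := by
  intro x hx y hy hxy
  have := h x hx y hy hxy
  rw [div_le_div_iff₀ (hf x hx) (hg x hx)] at this
  simp only [Pi.div_apply]
  rw [div_le_div_iff₀ (hg y hy) (hg x hx)]
  linarith

theorem monotoneOn_div_of_div_le_div {α : Type*} [Preorder α] {s : Set α} {f g : α → ℝ}
    (hf : ∀ x ∈ s, 0 < f x) (hg : ∀ x ∈ s, 0 < g x)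
    (h : ∀ x ∈ s, ∀ y ∈ s, x ≤ y → g y / g x ≤ f y / f x) : MonotoneOn (f / g) s := by
  intro x hx y hy hxy
  have := h x hx y hy hxy
  rw [div_le_div_iff₀ (hg x hx) (hf x hx)] at this
  simp only [Pi.div_apply]
  rw [div_le_div_iff₀ (hg x hx) (hg y hy)]
  linarith

theorem sub_le_sub_mul_div_of_div_le_div {f₁ f₂ φ₁ φ₂ : ℝ} (hφ₁ : φ₁ ≠ 0) (hφ₂ : 0 < φ₂)
    (h : f₂ / φ₂ ≤ f₁ / φ₁) : f₂ - f₁ ≤ (φ₂ - φ₁) * (f₁ / φ₁) := by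
  have hf₂ : f₂ ≤ φ₂ * (f₁ / φ₁) := by rwa [div_le_iff₀' hφ₂] at h
  have hf₁ : f₁ = φ₁ * (f₁ / φ₁) := by field_simp
  linarith


theorem LipschitzOnWith.sub_mul_le_mul_dist {s : Set ℝ} {g : ℝ → ℝ} {K B : ℝ≥0}
    (hg : LipschitzOnWith K g s)
    {x y c : ℝ} (hx : x ∈ s) (hy : y ∈ s) (hc : 0 ≤ c) (hcB : c ≤ B) :
    (g y - g x) * c ≤ B * K * dist x y :=
  calc (g y - g x) * c ≤ dist (g y) (g x) * c :=
        mul_le_mul_of_nonneg_right ((le_abs_self _).trans (Real.dist_eq _ _).ge) hc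
    _ ≤ K * dist y x * B := mul_le_mul (hg.dist_le_mul y hy x hx) hcB hc (by positivity)
    _ = B * K * dist x y := by rw [dist_comm]; ring

theorem lipschitzOnWith_of_antitoneOn_div_of_monotoneOn_div {s : Set ℝ} {f φ ψ : ℝ → ℝ}
    {K B : ℝ≥0} (hf : ∀ x ∈ s, 0 ≤ f x) (hφ : ∀ x ∈ s, 0 < φ x) (hψ : ∀ x ∈ s, 0 < ψ x)
    (hφL : LipschitzOnWith K φ s) (hψL : LipschitzOnWith K ψ s)
    (hanti : AntitoneOn (f / φ) s) (hmono : MonotoneOn (f / ψ) s)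
    (hφB : ∀ x ∈ s, f x / φ x ≤ B) (hψB : ∀ x ∈ s, f x / ψ x ≤ B) :
    LipschitzOnWith (B * K) f s := by
  refine LipschitzOnWith.of_dist_le_mul fun x hx y hy => ?_
  wlog hxy : x ≤ y generalizing x y
  · rw [dist_comm, dist_comm x]
    exact this y hy x hx (le_of_not_ge hxy)
  rw [Real.dist_eq, abs_sub_le_iff]
  constructor
  · calc f x - f y ≤ (ψ x - ψ y) * (f y / ψ y) :=
          sub_le_sub_mul_div_of_div_le_div (hψ y hy).ne' (hψ x hx) (hmono hx hy hxy)
      _ ≤ B * K * dist y x :=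
          hψL.sub_mul_le_mul_dist hy hx (div_nonneg (hf y hy) (hψ y hy).le) (hψB y hy)
      _ = B * K * dist x y := by rw [dist_comm]
  · calc f y - f x ≤ (φ y - φ x) * (f x / φ x) :=
          sub_le_sub_mul_div_of_div_le_div (hφ x hx).ne' (hφ y hy) (hanti hx hy hxy)
      _ ≤ B * K * dist x y :=
          hφL.sub_mul_le_mul_dist hx hy (div_nonneg (hf x hx) (hφ x hx).le) (hφB x hx)

theorem exists_ball_lipschitzOnWith_of_antitoneOn_div_of_monotoneOn_div {s : Set ℝ}
    (hs : IsOpen s) {x : ℝ} (hx : x ∈ s) {f φ ψ : ℝ → ℝ} (hf : ∀ x ∈ s, 0 ≤ f x)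
    (hφ : ∀ x ∈ s, 0 < φ x) (hψ : ∀ x ∈ s, 0 < ψ x)
    (hφx : ContDiffAt ℝ 1 φ x) (hψx : ContDiffAt ℝ 1 ψ x)
    (hanti : AntitoneOn (f / φ) s) (hmono : MonotoneOn (f / ψ) s) :
    ∃ ε > 0, ball x ε ⊆ s ∧ ∃ K : ℝ≥0, LipschitzOnWith K f (ball x ε) := by
  obtain ⟨K₁, U₁, hU₁, hφL⟩ := hφx.exists_lipschitzOnWith
  obtain ⟨K₂, U₂, hU₂, hψL⟩ := hψx.exists_lipschitzOnWith
  obtain ⟨δ, hδ, hδU⟩ :=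
    Metric.mem_nhds_iff.1 (Filter.inter_mem (Filter.inter_mem hU₁ hU₂) (hs.mem_nhds hx))
  set ε := δ / 2 with hε
  have hεδ : ball x ε ⊆ ball x δ := ball_subset_ball (half_le_self hδ.le)
  have hεs : ball x ε ⊆ s := fun t ht => (hδU (hεδ ht)).2
  have hlo : x - ε ∈ s :=
    (hδU (by rw [mem_ball, Real.dist_eq, abs_lt]; constructor <;> linarith)).2
  have hhi : x + ε ∈ s :=
    (hδU (by rw [mem_ball, Real.dist_eq, abs_lt]; constructor <;> linarith)).2
  set B := (max ((f / φ) (x - ε)) ((f / ψ) (x + ε))).toNNReal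
  have hB : ∀ t ∈ ball x ε, f t / φ t ≤ B ∧ f t / ψ t ≤ B := by
    intro t ht
    have hts := hεs ht
    rw [mem_ball, Real.dist_eq, abs_lt] at ht
    exact ⟨(hanti hlo hts (by linarith)).trans ((le_max_left _ _).trans (Real.le_coe_toNNReal _)),
      (hmono hts hhi (by linarith)).trans ((le_max_right _ _).trans (Real.le_coe_toNNReal _))⟩
  refine ⟨ε, half_pos hδ, hεs, B * max K₁ K₂, ?_⟩
  exact lipschitzOnWith_of_antitoneOn_div_of_monotoneOn_div (fun t ht => hf t (hεs ht))
    (fun t ht => hφ t (hεs ht)) (fun t ht => hψ t (hεs ht))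
    ((hφL.weaken (le_max_left _ _)).mono fun t ht => (hδU (hεδ ht)).1.1)
    ((hψL.weaken (le_max_right _ _)).mono fun t ht => (hδU (hεδ ht)).1.2)
    (hanti.mono hεs) (hmono.mono hεs) (fun t ht => (hB t ht).1) (fun t ht => (hB t ht).2)

theorem density_ratio_locally_lipschitz_general (a b N : ℝ)
    (h : ℝ → ℝ) (hpos : ∀ x ∈ Set.Ioo a b, 0 < h x)
    (hratio : ∀ σm σp s t : ℝ, a ≤ σm → σp ≤ b → σm < s → s ≤ t → t < σp →
      ((σp - t) / (σp - s)) ^ (N - 1) ≤ h t / h s ∧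
      h t / h s ≤ ((t - σm) / (s - σm)) ^ (N - 1)) :
    ∀ x ∈ Set.Ioo a b, ∃ ε > (0:ℝ), Metric.ball x ε ⊆ Set.Ioo a b ∧
      ∃ K : NNReal, LipschitzOnWith K h (Metric.ball x ε) := by
  intro x hx
  have hφ : ∀ t ∈ Ioo a b, 0 < (t - a) ^ (N - 1) := fun t ht => by
    have := sub_pos.2 ht.1; positivity
  have hψ : ∀ t ∈ Ioo a b, 0 < (b - t) ^ (N - 1) := fun t ht => by
    have := sub_pos.2 ht.2; positivity
  refine exists_ball_lipschitzOnWith_of_antitoneOn_div_of_monotoneOn_div isOpen_Ioo hx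
    (fun t ht => (hpos t ht).le) hφ hψ ?_ ?_ ?_ ?_
  · exact (contDiffAt_id.sub contDiffAt_const).rpow_const_of_ne (sub_pos.2 hx.1).ne'
  · exact (contDiffAt_const.sub contDiffAt_id).rpow_const_of_ne (sub_pos.2 hx.2).ne'
  · refine antitoneOn_div_of_div_le_div hpos hφ fun s hs t ht hst => ?_
    rw [← Real.div_rpow (sub_pos.2 ht.1).le (sub_pos.2 hs.1).le]
    exact (hratio a b s t le_rfl le_rfl hs.1 hst ht.2).2
  · refine monotoneOn_div_of_div_le_div hpos hψ fun s hs t ht hst => ?_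
    rw [← Real.div_rpow (sub_pos.2 ht.2).le (sub_pos.2 hs.2).le]
    exact (hratio a b s t le_rfl le_rfl hs.1 hst ht.2).1

/-- A positive function on `(a,b)` satisfying the two-sided density ratio bounds
`((σ₊-t)/(σ₊-s))^{N-1} ≤ h(t)/h(s) ≤ ((t-σ₋)/(s-σ₋))^{N-1}` is locally Lipschitz on `(a,b)`. -/
theorem density_ratio_locally_lipschitz (a b N : ℝ) (hab : a < b) (hN : 1 < N)
    (h : ℝ → ℝ) (hpos : ∀ x ∈ Set.Ioo a b, 0 < h x)
    (hratio : ∀ σm σp s t : ℝ, a ≤ σm → σp ≤ b → σm < s → s ≤ t → t < σp →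
      ((σp - t) / (σp - s)) ^ (N - 1) ≤ h t / h s ∧
      h t / h s ≤ ((t - σm) / (s - σm)) ^ (N - 1)) :
    ∀ x ∈ Set.Ioo a b, ∃ ε > (0:ℝ), Metric.ball x ε ⊆ Set.Ioo a b ∧
      ∃ K : NNReal, LipschitzOnWith K h (Metric.ball x ε) :=
  density_ratio_locally_lipschitz_general a b N h hpos hratio
end
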